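/- The graphs K₈, K₆ ∪ K₂, K₅ ∪ K₃, K₄ ∪ K₄, K₃ ∪ K₃ ∪ K₂, C₅ ∪ K₃, and K₂ ∪ K₂ ∪ K₂ ∪ K₂ are pairwise locally equienergetic: e(K₈) = e(K₆ ∪ K₂) = e(K₅ ∪ K₃) = e(K₄ ∪ K₄) = e(K₃ ∪ K₃ ∪ K₂) = e(C₅ ∪ K₃) = e(K₂ ∪ K₂ ∪ K₂ ∪ K₂). -/

import Mathlib

open SimpleGraph Matrix Finset

noncomputable section

/-- The adjacency matrix of a simple graph over `ℝ` is Hermitian. -/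
lemma adjMatrix_isHermitian {V : Type*} [Fintype V] (G : SimpleGraph V)
    [DecidableRel G.Adj] : (G.adjMatrix ℝ).IsHermitian := by
  rw [Matrix.IsHermitian, Matrix.conjTranspose_eq_transpose_of_trivial]
  exact G.isSymm_adjMatrix

/-- The energy of a finite simple graph: the sum of the absolute values of the
eigenvalues of its adjacency matrix. -/
def graphEnergy {V : Type*} [Fintype V] [DecidableEq V] (G : SimpleGraph V) : ℝ :=
  letI := Classical.decRel G.Adj
  ∑ i, |(adjMatrix_isHermitian G).eigenvalues i|

/-- The local energy of `G` at a vertex `v`: the energy of `G` minus the energy of the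
induced subgraph obtained by deleting `v`. -/
def localEnergyAt {V : Type*} [Fintype V] [DecidableEq V] (G : SimpleGraph V) (v : V) : ℝ :=
  graphEnergy G - graphEnergy (G.induce {u | u ≠ v})

/-- The local energy of `G`: the sum of the local energies at all vertices. -/
def localEnergy {V : Type*} [Fintype V] [DecidableEq V] (G : SimpleGraph V) : ℝ :=
  ∑ v, localEnergyAt G v

end

/-! Local energy is additive over disjoint unions: the spectrum of `G ∪ H` is the union of the
spectra, and deleting a vertex of one component leaves the other untouched. Hence each of the
seven graphs has local energy `16`, because every vertex of `Kₙ` (`n ≥ 2`) contributes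
`E(Kₙ) - E(Kₙ₋₁) = 2(n - 1) - 2(n - 2) = 2` and every vertex of `C₅` contributes
`E(C₅) - E(P₄) = (2 + 2√5) - 2√5 = 2`.

The energies are computed without diagonalising: if `p(A) = 0` and the polynomial `q` agrees
with `|·|` on the roots of `p`, then `E(G) = tr q(A)`; here `q` has degree at most `2`, so only
`tr A = 0` and `tr A²` are needed. -/

open Polynomial

namespace Matrix.IsHermitian

variable {n : Type*} [Fintype n] [DecidableEq n] {A : Matrix n n ℝ}

theorem trace_aeval (hA : A.IsHermitian) (q : ℝ[X]) :
    (aeval A q).trace = ∑ i, q.eval (hA.eigenvalues i) := by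
  let φ : (n → ℝ) →ₐ[ℝ] Matrix n n ℝ :=
    (Unitary.conjStarAlgAut ℝ _ hA.eigenvectorUnitary).toAlgEquiv.toAlgHom.comp
      (diagonalAlgHom ℝ)
  have hφ : A = φ hA.eigenvalues := by
    simpa [φ, RCLike.ofReal_real_eq_id] using hA.spectral_theorem
  rw [show aeval A q = φ (aeval hA.eigenvalues q) by rw [← aeval_algHom_apply, ← hφ]]
  simp [φ, trace_mul_cycle, aeval_pi_apply]

theorem eval_eigenvalues_eq_zero (hA : A.IsHermitian) {p : ℝ[X]} (hp : aeval A p = 0)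
    (i : n) : p.eval (hA.eigenvalues i) = 0 := by
  have : Nonempty n := ⟨i⟩
  simpa [hp] using
    spectrum.subset_polynomial_aeval A p ⟨_, hA.eigenvalues_mem_spectrum_real i, rfl⟩

end Matrix.IsHermitian

theorem abs_eq_div_sqrt_of_mul_sq_eq {c x r : ℝ} (hc : 0 < c) (hr : 0 ≤ r)
    (h : c * x ^ 2 = r ^ 2) : |x| = r / √c := by
  have hx : x ^ 2 = (r / √c) ^ 2 := by
    rw [div_pow, Real.sq_sqrt hc.le, ← h]
    field_simp
  rw [← Real.sqrt_sq_eq_abs, hx, Real.sqrt_sq (by positivity)]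

namespace SimpleGraph

section Energy

variable {V W : Type*}

theorem adjMatrix_sum (G : SimpleGraph V) (H : SimpleGraph W) [DecidableRel G.Adj]
    [DecidableRel H.Adj] [DecidableRel (G ⊕g H).Adj] :
    (G ⊕g H).adjMatrix ℝ = fromBlocks (G.adjMatrix ℝ) 0 0 (H.adjMatrix ℝ) := by
  ext (v | w) (v' | w') <;> simp

def Iso.induceNe {G : SimpleGraph V} {H : SimpleGraph W} (e : G ≃g H) (v : V) :
    G.induce {u | u ≠ v} ≃g H.induce {w | w ≠ e v} :=
  e.induce (e.toEquiv.bijOn fun _ => e.injective.ne_iff)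

def Iso.sumInduceNeInl (G : SimpleGraph V) (H : SimpleGraph W) (v : V) :
    (G ⊕g H).induce {u | u ≠ .inl v} ≃g G.induce {u | u ≠ v} ⊕g H where
  toFun
    | ⟨.inl a, h⟩ => .inl ⟨a, fun h' => h (congrArg _ h')⟩
    | ⟨.inr b, _⟩ => .inr b
  invFun
    | .inl ⟨a, h⟩ => ⟨.inl a, fun h' => h (Sum.inl_injective h')⟩
    | .inr b => ⟨.inr b, Sum.inr_ne_inl⟩
  left_inv := by rintro ⟨a | b, h⟩ <;> rfl
  right_inv := by rintro (⟨a, h⟩ | b) <;> rfl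
  map_rel_iff' := by rintro ⟨a | b, ha⟩ ⟨c | d, hc⟩ <;> simp

variable [Fintype V] [DecidableEq V] [Fintype W] [DecidableEq W]

theorem graphEnergy_eq_sum_abs_eigenvalues (G : SimpleGraph V) [DecidableRel G.Adj] :
    graphEnergy G = ∑ i, |(adjMatrix_isHermitian G).eigenvalues i| := by
  unfold graphEnergy
  congr!

theorem graphEnergy_eq_sum_abs_roots (G : SimpleGraph V) [DecidableRel G.Adj] :
    graphEnergy G = ((G.adjMatrix ℝ).charpoly.roots.map (|·|)).sum := by
  rw [graphEnergy_eq_sum_abs_eigenvalues, (adjMatrix_isHermitian G).roots_charpoly_eq_eigenvalues,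
    Multiset.map_map]
  rfl

theorem graphEnergy_eq_trace_aeval (G : SimpleGraph V) [DecidableRel G.Adj] {p q : ℝ[X]}
    (hp : aeval (G.adjMatrix ℝ) p = 0) (hq : ∀ x, p.eval x = 0 → |x| = q.eval x) :
    graphEnergy G = (aeval (G.adjMatrix ℝ) q).trace := by
  rw [graphEnergy_eq_sum_abs_eigenvalues, (adjMatrix_isHermitian G).trace_aeval]
  exact Finset.sum_congr rfl fun i _ =>
    hq _ ((adjMatrix_isHermitian G).eval_eigenvalues_eq_zero hp i)

theorem Iso.graphEnergy_eq {G : SimpleGraph V} {H : SimpleGraph W} (e : G ≃g H) :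
    graphEnergy G = graphEnergy H := by
  classical
  rw [graphEnergy_eq_sum_abs_roots, graphEnergy_eq_sum_abs_roots, ← e.reindex_adjMatrix ℝ,
    charpoly_reindex]

theorem graphEnergy_sum (G : SimpleGraph V) (H : SimpleGraph W) :
    graphEnergy (G ⊕g H) = graphEnergy G + graphEnergy H := by
  classical
  rw [graphEnergy_eq_sum_abs_roots, graphEnergy_eq_sum_abs_roots, graphEnergy_eq_sum_abs_roots,
    adjMatrix_sum, charpoly_fromBlocks_zero₁₂,
    roots_mul (mul_ne_zero (charpoly_monic _).ne_zero (charpoly_monic _).ne_zero),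
    Multiset.map_add, Multiset.sum_add]

theorem Iso.localEnergyAt_eq {G : SimpleGraph V} {H : SimpleGraph W} (e : G ≃g H) (v : V) :
    localEnergyAt H (e v) = localEnergyAt G v := by
  rw [localEnergyAt, localEnergyAt, e.graphEnergy_eq, (e.induceNe v).graphEnergy_eq]

theorem localEnergyAt_sum_inl (G : SimpleGraph V) (H : SimpleGraph W) (v : V) :
    localEnergyAt (G ⊕g H) (.inl v) = localEnergyAt G v := by
  rw [localEnergyAt, localEnergyAt, graphEnergy_sum, (Iso.sumInduceNeInl G H v).graphEnergy_eq,
    graphEnergy_sum, add_sub_add_right_eq_sub]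

theorem localEnergyAt_sum_inr (G : SimpleGraph V) (H : SimpleGraph W) (w : W) :
    localEnergyAt (G ⊕g H) (.inr w) = localEnergyAt H w :=
  (Iso.sumComm.localEnergyAt_eq (.inr w)).symm.trans (localEnergyAt_sum_inl H G w)

theorem localEnergy_sum (G : SimpleGraph V) (H : SimpleGraph W) :
    localEnergy (G ⊕g H) = localEnergy G + localEnergy H := by
  simp only [localEnergy, Fintype.sum_sum_type, localEnergyAt_sum_inl, localEnergyAt_sum_inr]

end Energy

section CompleteGraph

variable {V : Type*} [Fintype V] [DecidableEq V]

theorem aeval_adjMatrix_top_eq_zero :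
    aeval ((⊤ : SimpleGraph V).adjMatrix ℝ)
      ((X - C ((Fintype.card V : ℝ) - 1)) * (X + 1)) = 0 := by
  have hJ : (of 1 : Matrix V V ℝ) * of 1 = (Fintype.card V : ℝ) • of 1 := by
    ext; simp [mul_apply]
  rw [adjMatrix_completeGraph_eq_of_one_sub_one]
  simp only [map_mul, map_sub, map_add, aeval_X, aeval_C, map_one, Algebra.algebraMap_eq_smul_one]
  rw [sub_add_cancel, sub_sub_sub_cancel_right, sub_mul, hJ, smul_mul_assoc, one_mul, sub_self]

theorem graphEnergy_top [Nonempty V] :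
    graphEnergy (⊤ : SimpleGraph V) = 2 * ((Fintype.card V : ℝ) - 1) := by
  set n : ℝ := (Fintype.card V : ℝ)
  have hn : 1 ≤ n := Nat.one_le_cast.mpr Fintype.card_pos
  -- the affine interpolant of `|·|` at the two eigenvalues `n - 1` and `-1`
  rw [graphEnergy_eq_trace_aeval _ aeval_adjMatrix_top_eq_zero
    (q := C ((n - 2) / n) * X + C ((2 * n - 2) / n))]
  · simp only [map_add, map_mul, aeval_C, aeval_X, Algebra.algebraMap_eq_smul_one, smul_one_mul,
      trace_add, trace_smul, trace_adjMatrix, trace_one, smul_eq_mul]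
    field_simp
    ring
  · intro x hx
    rw [eval_mul, mul_eq_zero] at hx
    simp only [eval_sub, eval_add, eval_X, eval_C, eval_one, sub_eq_zero,
      add_eq_zero_iff_eq_neg] at hx
    simp only [eval_add, eval_mul, eval_C, eval_X]
    rcases hx with rfl | rfl
    · rw [abs_of_nonneg (by linarith)]
      field_simp
      ring
    · field_simp
      ring

theorem localEnergyAt_top [Nontrivial V] (v : V) : localEnergyAt (⊤ : SimpleGraph V) v = 2 := by
  have : Nonempty {u | u ≠ v} := let ⟨u, hu⟩ := exists_ne v; ⟨⟨u, hu⟩⟩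
  rw [localEnergyAt, ← completeGraph_eq_top, induce_top, graphEnergy_top, graphEnergy_top,
    Set.card_ne_eq, Nat.cast_pred Fintype.card_pos]
  ring

theorem localEnergy_top [Nontrivial V] :
    localEnergy (⊤ : SimpleGraph V) = 2 * Fintype.card V := by
  simp [localEnergy, localEnergyAt_top, mul_comm]

end CompleteGraph

section CycleGraphFive

instance (n : ℕ) : DecidableRel (pathGraph n).Adj := fun _ _ => decidable_of_iff' _ pathGraph_adj

theorem adjMatrix_pathGraph_four :
    (pathGraph 4).adjMatrix ℝ = !![0, 1, 0, 0; 1, 0, 1, 0; 0, 1, 0, 1; 0, 0, 1, 0] := by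
  ext i j
  fin_cases i <;> fin_cases j <;> simp [pathGraph_adj]

theorem sq_adjMatrix_pathGraph_four :
    (pathGraph 4).adjMatrix ℝ ^ 2 = !![1, 0, 1, 0; 0, 2, 0, 1; 1, 0, 2, 0; 0, 1, 0, 1] := by
  rw [adjMatrix_pathGraph_four, sq]
  ext i j
  fin_cases i <;> fin_cases j <;> simp <;> norm_num

theorem aeval_adjMatrix_pathGraph_four_eq_zero :
    aeval ((pathGraph 4).adjMatrix ℝ) (X ^ 4 - C 3 * X ^ 2 + 1 : ℝ[X]) = 0 := by
  simp only [map_add, map_sub, map_mul, map_pow, aeval_X, aeval_C, map_one,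
    Algebra.algebraMap_eq_smul_one, smul_one_mul]
  rw [show 4 = 2 * 2 by rfl, pow_mul, sq_adjMatrix_pathGraph_four]
  ext i j
  fin_cases i <;> fin_cases j <;> simp [sq, one_apply] <;> norm_num

theorem graphEnergy_pathGraph_four : graphEnergy (pathGraph 4) = 2 * √5 := by
  -- `x⁴ - 3x² + 1 = (x² + 1)² - 5x²`, so `|x| = (x² + 1) / √5` at its roots
  rw [graphEnergy_eq_trace_aeval _ aeval_adjMatrix_pathGraph_four_eq_zero
    (q := C (√5)⁻¹ * (X ^ 2 + 1))]
  · simp only [map_mul, map_add, map_pow, aeval_C, aeval_X, map_one,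
      Algebra.algebraMap_eq_smul_one, smul_one_mul, trace_smul, trace_add, trace_one,
      sq_adjMatrix_pathGraph_four]
    simp [trace, Fin.sum_univ_four]
    field_simp
    norm_num
  · intro x hx
    simp only [eval_add, eval_sub, eval_mul, eval_pow, eval_C, eval_X, eval_one] at hx ⊢
    rw [abs_eq_div_sqrt_of_mul_sq_eq (by norm_num) (by positivity)
      (by linear_combination (-1 : ℝ) * hx : (5 : ℝ) * x ^ 2 = (x ^ 2 + 1) ^ 2)]
    ring

theorem adjMatrix_cycleGraph_five :
    (cycleGraph 5).adjMatrix ℝ =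
      !![0, 1, 0, 0, 1; 1, 0, 1, 0, 0; 0, 1, 0, 1, 0; 0, 0, 1, 0, 1; 1, 0, 0, 1, 0] := by
  ext i j
  fin_cases i <;> fin_cases j <;> simp [adjMatrix_apply] <;> decide

theorem sq_adjMatrix_cycleGraph_five :
    (cycleGraph 5).adjMatrix ℝ ^ 2 =
      !![2, 0, 1, 1, 0; 0, 2, 0, 1, 1; 1, 0, 2, 0, 1; 1, 1, 0, 2, 0; 0, 1, 1, 0, 2] := by
  rw [adjMatrix_cycleGraph_five, sq]
  ext i j
  fin_cases i <;> fin_cases j <;> simp <;> norm_num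

theorem aeval_adjMatrix_cycleGraph_five_eq_zero :
    aeval ((cycleGraph 5).adjMatrix ℝ) ((X - C 2) * (X ^ 2 + X - 1) : ℝ[X]) = 0 := by
  simp only [map_add, map_sub, map_mul, map_pow, aeval_X, aeval_C, map_one,
    Algebra.algebraMap_eq_smul_one]
  rw [sq_adjMatrix_cycleGraph_five, adjMatrix_cycleGraph_five]
  ext i j
  fin_cases i <;> fin_cases j <;> simp [mul_apply, Fin.sum_univ_five, one_apply] <;> norm_num

theorem graphEnergy_cycleGraph_five : graphEnergy (cycleGraph 5) = 2 + 2 * √5 := by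
  -- at the roots of `x² + x - 1` the first summand of `q` vanishes and `|x| = (2 - x) / √5`;
  -- at the root `2` the second summand vanishes
  rw [graphEnergy_eq_trace_aeval _ aeval_adjMatrix_cycleGraph_five_eq_zero
    (q := C (2 / 5) * (X ^ 2 + X - 1) + C (√5)⁻¹ * (C 2 - X))]
  · simp only [map_mul, map_add, map_sub, map_pow, aeval_C, aeval_X, map_one,
      Algebra.algebraMap_eq_smul_one, smul_one_mul, trace_smul, trace_add, trace_sub, trace_one,
      trace_adjMatrix, sq_adjMatrix_cycleGraph_five]
    simp [trace, Fin.sum_univ_five]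
    field_simp
    linear_combination (-5 : ℝ) * Real.sq_sqrt (show (0 : ℝ) ≤ 5 by norm_num)
  · intro x hx
    simp only [eval_add, eval_sub, eval_mul, eval_pow, eval_C, eval_X, eval_one, mul_eq_zero,
      sub_eq_zero] at hx ⊢
    rcases hx with rfl | hx
    · norm_num
    · have hx1 : x ≤ 1 := by nlinarith
      rw [abs_eq_div_sqrt_of_mul_sq_eq (by norm_num) (by linarith)
        (by linear_combination 4 * hx : (5 : ℝ) * x ^ 2 = (2 - x) ^ 2)]
      linear_combination (-2 / 5 : ℝ) * hx

def Embedding.pathGraphFourCycleGraphFive (v : Fin 5) : pathGraph 4 ↪g cycleGraph 5 where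
  toFun j := v + j.succ
  inj' _ _ h := Fin.succ_injective _ (add_left_cancel h)
  map_rel_iff' {i j} := by
    revert v i j
    decide

theorem Embedding.range_pathGraphFourCycleGraphFive (v : Fin 5) :
    Set.range (pathGraphFourCycleGraphFive v) = {u | u ≠ v} := by
  ext u
  change (∃ j : Fin 4, v + j.succ = u) ↔ u ≠ v
  revert v u
  decide

noncomputable def Iso.induceNeCycleGraphFive (v : Fin 5) :
    (cycleGraph 5).induce {u | u ≠ v} ≃g pathGraph 4 :=
  (Iso.refl.induce (Embedding.range_pathGraphFourCycleGraphFive v ▸ Set.bijOn_id _)).trans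
    (Embedding.pathGraphFourCycleGraphFive v).isoInduceRange.symm

theorem localEnergy_cycleGraph_five : localEnergy (cycleGraph 5) = 10 := by
  have h : ∀ v, localEnergyAt (cycleGraph 5) v = 2 := fun v => by
    rw [localEnergyAt, graphEnergy_cycleGraph_five, (Iso.induceNeCycleGraphFive v).graphEnergy_eq,
      graphEnergy_pathGraph_four, add_sub_cancel_right]
  simp [localEnergy, h]
  norm_num

end CycleGraphFive

end SimpleGraph

theorem localEnergy_K8_eq :
    localEnergy (⊤ : SimpleGraph (Fin 8)) =
      localEnergy ((⊤ : SimpleGraph (Fin 6)) ⊕g (⊤ : SimpleGraph (Fin 2))) ∧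
    localEnergy ((⊤ : SimpleGraph (Fin 6)) ⊕g (⊤ : SimpleGraph (Fin 2))) =
      localEnergy ((⊤ : SimpleGraph (Fin 5)) ⊕g (⊤ : SimpleGraph (Fin 3))) ∧
    localEnergy ((⊤ : SimpleGraph (Fin 5)) ⊕g (⊤ : SimpleGraph (Fin 3))) =
      localEnergy ((⊤ : SimpleGraph (Fin 4)) ⊕g (⊤ : SimpleGraph (Fin 4))) ∧
    localEnergy ((⊤ : SimpleGraph (Fin 4)) ⊕g (⊤ : SimpleGraph (Fin 4))) =
      localEnergy (((⊤ : SimpleGraph (Fin 3)) ⊕g (⊤ : SimpleGraph (Fin 3)))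
        ⊕g (⊤ : SimpleGraph (Fin 2))) ∧
    localEnergy (((⊤ : SimpleGraph (Fin 3)) ⊕g (⊤ : SimpleGraph (Fin 3)))
        ⊕g (⊤ : SimpleGraph (Fin 2))) =
      localEnergy (cycleGraph 5 ⊕g (⊤ : SimpleGraph (Fin 3))) ∧
    localEnergy (cycleGraph 5 ⊕g (⊤ : SimpleGraph (Fin 3))) =
      localEnergy ((((⊤ : SimpleGraph (Fin 2)) ⊕g (⊤ : SimpleGraph (Fin 2)))
        ⊕g (⊤ : SimpleGraph (Fin 2))) ⊕g (⊤ : SimpleGraph (Fin 2))) := by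
  simp only [localEnergy_sum, localEnergy_top, localEnergy_cycleGraph_five, Fintype.card_fin]
  norm_num
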